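/- (Absence of short chords makes the flow map injective on the Legendrian.) Let n ≥ 1, let H, Σ and a closed Legendrian submanifold (P, ι) of Σ be as in the context, let φ be the flow of the Reeb vector field as in the context, and let T > 0. Assume there is no Reeb chord of length T′ for any 0 < T′ ≤ T. Then the map P × [0, T] → ℂⁿ, (p, t) ↦ φ(t, ι(p)), is injective. -/

import Mathlib

open Complex
open scoped Manifold ContDiff

noncomputable section

/-- `ℂⁿ`, identified with `EuclideanSpace ℂ (Fin n)`. -/
abbrev Cn (n : ℕ) : Type := EuclideanSpace ℂ (Fin n)

/-- The standard symplectic form `ω₀(v,w) = Im ⟪v,w⟫`. -/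
def omega0 {n : ℕ} (v w : Cn n) : ℝ := (inner ℂ v w : ℂ).im

/-- The Liouville one-form `λ_z(v) = (1/2) Im ⟪z,v⟫`. -/
def liouville {n : ℕ} (z v : Cn n) : ℝ := (1 / 2) * (inner ℂ z v : ℂ).im

/-- `g` is the gradient of `H` at `z` with respect to the real inner product `Re ⟪·,·⟫`. -/
def IsGradientAt {n : ℕ} (H : Cn n → ℝ) (g z : Cn n) : Prop :=
  HasFDerivAt H (Complex.reCLM.comp (((innerSL ℂ) g).restrictScalars ℝ)) z

/-- A Reeb chord of length `T > 0` for the Reeb vector field `z ↦ i • ∇H(z)`,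
with endpoints on the set `Λ`. -/
def IsReebChord {n : ℕ} (gradH : Cn n → Cn n) (Λ : Set (Cn n)) (T : ℝ) : Prop :=
  0 < T ∧ ∃ γ : ℝ → Cn n,
    (∀ t ∈ Set.Icc (0 : ℝ) T,
      HasDerivWithinAt γ (Complex.I • gradH (γ t)) (Set.Icc (0 : ℝ) T) t) ∧
    γ 0 ∈ Λ ∧ γ T ∈ Λ

/-- `φ` is the (smooth) flow of the Reeb vector field `z ↦ i • ∇H(z)` on `ℂⁿ \ {0}`. -/
def IsReebFlow {n : ℕ} (gradH : Cn n → Cn n) (φ : ℝ → Cn n → Cn n) : Prop :=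
  (∀ z : Cn n, z ≠ 0 → φ 0 z = z) ∧
  (∀ (t : ℝ) (z : Cn n), z ≠ 0 → φ t z ≠ 0) ∧
  (∀ (t : ℝ) (z : Cn n), z ≠ 0 →
    HasDerivAt (fun s => φ s z) (Complex.I • gradH (φ t z)) t) ∧
  ContDiffOn ℝ (⊤ : ℕ∞) (fun q : ℝ × Cn n => φ q.1 q.2) (Set.univ ×ˢ {(0 : Cn n)}ᶜ)

def Tmap (n : ℕ) : Cn n →ₗ[ℝ] (Cn n →L[ℝ] ℝ) where
  toFun g := Complex.reCLM.comp (((innerSL ℂ) g).restrictScalars ℝ)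
  map_add' g g' := by ext v; simp [inner_add_left]
  map_smul' r g := by
    ext v
    have h : (r : ℂ) • g = r • g := by
      rw [← Complex.coe_algebraMap, algebraMap_smul]
    rw [← h]
    simp [inner_smul_left]
    rw [← h, inner_smul_left]
    simp

lemma Tmap_inj (n : ℕ) : Function.Injective (Tmap n) := by
  intro g g' h
  have h0 : Tmap n (g - g') = 0 := by rw [map_sub, h, sub_self]
  have h2 := congrArg (fun L => L (g - g')) h0
  simp only [Tmap, LinearMap.coe_mk, AddHom.coe_mk, ContinuousLinearMap.comp_apply,
    ContinuousLinearMap.coe_restrictScalars', reCLM_apply,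
    ContinuousLinearMap.zero_apply] at h2
  have h3 : RCLike.re (inner ℂ (g - g') (g - g') : ℂ) = 0 := by
    rw [RCLike.re_to_complex]; exact h2
  rw [inner_self_eq_norm_sq] at h3
  have h4 : ‖g - g'‖ = 0 := by nlinarith [norm_nonneg (g - g')]
  exact sub_eq_zero.mp (norm_eq_zero.mp h4)

lemma Tmap_finrank (n : ℕ) :
    Module.finrank ℝ (Cn n) = Module.finrank ℝ (Cn n →L[ℝ] ℝ) := by
  rw [← (LinearMap.toContinuousLinearMap : (Cn n →ₗ[ℝ] ℝ) ≃ₗ[ℝ] (Cn n →L[ℝ] ℝ)).finrank_eq,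
    Module.finrank_linearMap, Module.finrank_self, mul_one]

def Tequiv (n : ℕ) : Cn n ≃L[ℝ] (Cn n →L[ℝ] ℝ) :=
  ((Tmap n).linearEquivOfInjective (Tmap_inj n) (Tmap_finrank n)).toContinuousLinearEquiv

lemma Tequiv_apply (n : ℕ) (g : Cn n) : Tequiv n g = Tmap n g := rfl

/-- Global uniqueness of solutions of the ODE for a locally Lipschitz vector field,
for solutions avoiding the bad set. -/
lemma ode_unique {n : ℕ} {v : Cn n → Cn n}
    (hlip : ∀ x : Cn n, x ≠ 0 → ∃ K : NNReal, ∃ U ∈ nhds x, LipschitzOnWith K v U)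
    {f g : ℝ → Cn n}
    (hf : ∀ t, HasDerivAt f (v (f t)) t) (hf0 : ∀ t, f t ≠ 0)
    (hg : ∀ t, HasDerivAt g (v (g t)) t)
    {t₀ : ℝ} (heq : f t₀ = g t₀) : f = g := by
  have hfc : Continuous f := continuous_iff_continuousAt.2 fun t => (hf t).continuousAt
  have hgc : Continuous g := continuous_iff_continuousAt.2 fun t => (hg t).continuousAt
  set S : Set ℝ := {t | f t = g t} with hS
  have hS_closed : IsClosed S := isClosed_eq hfc hgc
  have hS_open : IsOpen S := by
    rw [isOpen_iff_mem_nhds]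
    intro t₁ ht₁
    obtain ⟨K, U, hU, hKl⟩ := hlip (f t₁) (hf0 t₁)
    have hfU : ∀ᶠ t in nhds t₁, f t ∈ U := hfc.continuousAt.preimage_mem_nhds hU
    have hgU : ∀ᶠ t in nhds t₁, g t ∈ U := by
      apply hgc.continuousAt.preimage_mem_nhds
      rwa [← show f t₁ = g t₁ from ht₁]
    have key : f =ᶠ[nhds t₁] g :=
      ODE_solution_unique_of_eventually (v := fun _ => v) (s := fun _ => U)
        (Filter.Eventually.of_forall fun _ => hKl)
        (hfU.mono fun t ht => ⟨hf t, ht⟩)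
        (hgU.mono fun t ht => ⟨hg t, ht⟩) ht₁
    exact key
  have hne : S.Nonempty := ⟨t₀, heq⟩
  have : S = Set.univ := by
    rcases isClopen_iff.mp ⟨hS_closed, hS_open⟩ with h | h
    · exact absurd (h ▸ hne) (by simp)
    · exact h
  funext t
  exact (Set.eq_univ_iff_forall.mp this t : f t = g t)

/-- **Absence of short chords makes the flow map injective on the Legendrian**:
if the closed Legendrian `(P, ι)` in `Σ = H⁻¹(1)` has no Reeb chord of length
`T' ≤ T`, then the map `P × [0,T] → ℂⁿ`, `(p,t) ↦ φ(t, ι(p))`, is injective. -/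
theorem flow_injective_of_chordless
    (n : ℕ) (hn : 1 ≤ n)
    (H : Cn n → ℝ) (gradH : Cn n → Cn n)
    (hH_smooth : ContDiffOn ℝ (⊤ : ℕ∞) H {(0 : Cn n)}ᶜ)
    (hH_pos : ∀ z : Cn n, z ≠ 0 → 0 < H z)
    (hH_hom : ∀ r : ℝ, 0 < r → ∀ z : Cn n, H (r • z) = r ^ 2 * H z)
    (hgrad : ∀ z : Cn n, z ≠ 0 → IsGradientAt H (gradH z) z)
    -- `(P, ι)` is a closed Legendrian submanifold of `Σ = H⁻¹(1)`:
    (P : Type) [TopologicalSpace P]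
    [ChartedSpace (EuclideanSpace ℝ (Fin (n - 1))) P]
    [IsManifold (𝓡 (n - 1)) (⊤ : ℕ∞) P]
    [CompactSpace P] [Nonempty P]
    (ι : P → Cn n)
    (hι_smooth : ContMDiff (𝓡 (n - 1)) 𝓘(ℝ, Cn n) (⊤ : ℕ∞) ι)
    (hι_emb : Topology.IsEmbedding ι)
    (hι_imm : ∀ p : P, Function.Injective (mfderiv (𝓡 (n - 1)) 𝓘(ℝ, Cn n) ι p))
    (hι_Sigma : ∀ p : P, H (ι p) = 1)
    (hι_leg : ∀ (p : P) (v : TangentSpace (𝓡 (n - 1)) p),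
      liouville (ι p) (mfderiv (𝓡 (n - 1)) 𝓘(ℝ, Cn n) ι p v) = 0)
    -- the Reeb flow, and the assumption that there is no Reeb chord of length `≤ T`:
    (φ : ℝ → Cn n → Cn n) (hφ : IsReebFlow gradH φ)
    (T : ℝ) (hT : 0 < T)
    (hnochord : ∀ T' : ℝ, T' ≤ T → ¬ IsReebChord gradH (Set.range ι) T') :
    ∀ (p p' : P) (t t' : ℝ), t ∈ Set.Icc (0 : ℝ) T → t' ∈ Set.Icc (0 : ℝ) T →
      φ t (ι p) = φ t' (ι p') → p = p' ∧ t = t' := by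
  obtain ⟨h0, hne, hder, -⟩ := hφ
  -- `H 0 = 0`, hence `ι p ≠ 0`.
  have hH0 : H 0 = 0 := by
    have := hH_hom 2 two_pos 0
    rw [smul_zero] at this
    linarith
  have hι0 : ∀ p : P, ι p ≠ 0 := by
    intro p hp
    have := hι_Sigma p
    rw [hp, hH0] at this
    norm_num at this
  -- the Reeb vector field
  set v : Cn n → Cn n := fun z => Complex.I • gradH z with hv
  -- `gradH` agrees with a smooth function on `{0}ᶜ`
  have hopen : IsOpen ({(0 : Cn n)}ᶜ) := isOpen_compl_singleton
  set fd : Cn n → (Cn n →L[ℝ] ℝ) := fun z => fderivWithin ℝ H {(0 : Cn n)}ᶜ z with hfd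
  have hfd_smooth : ContDiffOn ℝ (⊤ : ℕ∞) fd {(0 : Cn n)}ᶜ :=
    hH_smooth.fderivWithin hopen.uniqueDiffOn (by simp)
  have hgrad_eq : ∀ z : Cn n, z ≠ 0 → gradH z = (Tequiv n).symm (fd z) := by
    intro z hz
    rw [ContinuousLinearEquiv.eq_symm_apply, Tequiv_apply]
    show Tmap n (gradH z) = fderivWithin ℝ H {(0 : Cn n)}ᶜ z
    rw [fderivWithin_of_isOpen hopen hz, (hgrad z hz).fderiv]
    rfl
  -- local Lipschitz property of the Reeb vector field
  have hlip : ∀ x : Cn n, x ≠ 0 → ∃ K : NNReal, ∃ U ∈ nhds x, LipschitzOnWith K v U := by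
    intro x hx
    have hmem : {(0 : Cn n)}ᶜ ∈ nhds x := hopen.mem_nhds hx
    have h1 : ContDiffAt ℝ 1 fd x := (hfd_smooth.contDiffAt hmem).of_le (by simp)
    obtain ⟨K, U, hU, hKl⟩ := h1.exists_lipschitzOnWith
    refine ⟨1 * ‖((Tequiv n).symm : (Cn n →L[ℝ] ℝ) →L[ℝ] Cn n)‖₊ * K,
      U ∩ {(0 : Cn n)}ᶜ, Filter.inter_mem hU hmem, ?_⟩
    have lipI : LipschitzWith 1 (fun w : Cn n => Complex.I • w) := by
      apply LipschitzWith.of_dist_le_mul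
      intro a b
      rw [dist_eq_norm, dist_eq_norm, ← smul_sub, norm_smul]
      simp
    have lipT : LipschitzWith ‖((Tequiv n).symm : (Cn n →L[ℝ] ℝ) →L[ℝ] Cn n)‖₊
        ((Tequiv n).symm : (Cn n →L[ℝ] ℝ) → Cn n) :=
      ((Tequiv n).symm : (Cn n →L[ℝ] ℝ) →L[ℝ] Cn n).lipschitz
    have hcomp : LipschitzOnWith (1 * ‖((Tequiv n).symm : (Cn n →L[ℝ] ℝ) →L[ℝ] Cn n)‖₊ * K)
        (((fun w : Cn n => Complex.I • w) ∘ ((Tequiv n).symm : (Cn n →L[ℝ] ℝ) → Cn n)) ∘ fd)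
        (U ∩ {(0 : Cn n)}ᶜ) :=
      (lipI.comp lipT).comp_lipschitzOnWith (hKl.mono Set.inter_subset_left)
    intro a ha b hb
    have h2 := hcomp ha hb
    have ea : (((fun w : Cn n => Complex.I • w) ∘ ((Tequiv n).symm : (Cn n →L[ℝ] ℝ) → Cn n)) ∘ fd) a
        = v a := by
      simp only [Function.comp_apply, hv]
      rw [hgrad_eq a ha.2]
    have eb : (((fun w : Cn n => Complex.I • w) ∘ ((Tequiv n).symm : (Cn n →L[ℝ] ℝ) → Cn n)) ∘ fd) b
        = v b := by
      simp only [Function.comp_apply, hv]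
      rw [hgrad_eq b hb.2]
    rw [ea, eb] at h2
    exact h2
  -- key step, assuming `t ≤ t'`
  have key : ∀ (p p' : P) (t t' : ℝ), t ∈ Set.Icc (0 : ℝ) T → t' ∈ Set.Icc (0 : ℝ) T →
      t ≤ t' → φ t (ι p) = φ t' (ι p') → p = p' ∧ t = t' := by
    intro p p' t t' ht ht' htt hpq
    have hz : ι p ≠ 0 := hι0 p
    have hz' : ι p' ≠ 0 := hι0 p'
    set f : ℝ → Cn n := fun s => φ (s + t) (ι p) with hf
    set g : ℝ → Cn n := fun s => φ (s + t') (ι p') with hg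
    have hfd' : ∀ s, HasDerivAt f (v (f s)) s := fun s =>
      HasDerivAt.comp_add_const s t (hder (s + t) (ι p) hz)
    have hgd' : ∀ s, HasDerivAt g (v (g s)) s := fun s =>
      HasDerivAt.comp_add_const s t' (hder (s + t') (ι p') hz')
    have hf0 : ∀ s, f s ≠ 0 := fun s => hne _ _ hz
    have heq0 : f 0 = g 0 := by
      show φ (0 + t) (ι p) = φ (0 + t') (ι p')
      rw [zero_add, zero_add]; exact hpq
    have hfg : f = g := ode_unique hlip hfd' hf0 hgd' heq0
    have hat : f (-t) = g (-t) := congrFun hfg (-t)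
    have hfz : f (-t) = ι p := by
      show φ (-t + t) (ι p) = ι p
      rw [neg_add_cancel]; exact h0 _ hz
    have hgz : g (-t) = φ (t' - t) (ι p') := by
      show φ (-t + t') (ι p') = _
      rw [neg_add_eq_sub]
    rcases eq_or_lt_of_le htt with h | h
    · subst h
      refine ⟨hι_emb.injective ?_, rfl⟩
      rw [← hfz, hat, hgz, sub_self, h0 _ hz']
    · exfalso
      apply hnochord (t' - t) (by linarith [ht'.2, ht.1])
      refine ⟨by linarith, fun s => φ s (ι p'), ?_, ?_, ?_⟩
      · intro s hs
        exact (hder s (ι p') hz').hasDerivWithinAt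
      · show φ 0 (ι p') ∈ _
        rw [h0 _ hz']; exact ⟨p', rfl⟩
      · show φ (t' - t) (ι p') ∈ _
        rw [← hgz, ← hat, hfz]; exact ⟨p, rfl⟩
  intro p p' t t' ht ht' hpq
  rcases le_total t t' with h | h
  · exact key p p' t t' ht ht' h hpq
  · obtain ⟨h1, h2⟩ := key p' p t' t ht' ht h hpq.symm
    exact ⟨h1.symm, h2.symm⟩
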